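/- Let α ∈ ℂ*, q ≥ 1, n ≥ 2 with q ≥ n−1, and define Φ : Λ/((t−α)^q) → ℂ^{1×(n-1)} on the basis e_j = [(t−α)^j] by Φ(e_j) = α^j e₁ᵀ (J⁻¹ − I)^j for 0 ≤ j ≤ q−1, extended ℂ-linearly, where J is the (n-1)×(n-1) unipotent Jordan block and e₁ᵀ = (1,0,…,0). Then Φ((t−α)^q · y) = 0 for all y, i.e., Φ is well-defined on the quotient, and Φ(t·y) = α Φ(y) J⁻¹ for all y. -/

import Mathlib

/-!
Since `(t - α)^q` vanishes in the quotient, the first claim is immediate. For the second, write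
`J = 1 + N` and `P = J⁻¹ - 1`, so `Φ(e_j) = α^j e₁ᵀ P^j`. Multiplication by `t` sends `e_j` to
`e_{j+1} + α e_j`, and `α^{j+1} e₁ᵀ P^{j+1} + α^{j+1} e₁ᵀ P^j = α Φ(e_j) (P + 1) = α Φ(e_j) J⁻¹`.
At `j = q - 1` this needs `Φ(e_q) = 0 = P^q`: indeed `P = -N J⁻¹` with `N` and `J⁻¹` commuting,
so `P^(n-1) = 0`, and `q ≥ n - 1`.
-/

open LaurentPolynomial

/-- The m×m nilpotent matrix with 1's on the superdiagonal. -/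
def Nmat (m : ℕ) : Matrix (Fin m) (Fin m) ℂ :=
  Matrix.of fun i j => if (i : ℕ) + 1 = (j : ℕ) then 1 else 0

lemma Nmat_pow_apply (m k : ℕ) (i j : Fin m) :
    (Nmat m ^ k) i j = if (i : ℕ) + k = j then 1 else 0 := by
  induction k generalizing j with
  | zero => simp [Matrix.one_apply, Fin.ext_iff]
  | succ k ih =>
    rw [pow_succ, Matrix.mul_apply]
    simp only [ih]
    by_cases h : (i : ℕ) + k < m
    · rw [Finset.sum_eq_single (⟨i + k, h⟩ : Fin m)]
      · simp [Nmat, ← add_assoc]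
      · intro l _ hl
        rw [if_neg, zero_mul]
        simpa [Fin.ext_iff, eq_comm] using hl
      · simp
    · rw [Finset.sum_eq_zero, eq_comm, if_neg]
      · omega
      · intro l _
        rw [if_neg, zero_mul]
        omega

lemma Nmat_pow_self (m : ℕ) : Nmat m ^ m = 0 := by
  ext i j
  rw [Nmat_pow_apply, Matrix.zero_apply, if_neg]
  omega

lemma sub_one_pow_eq_zero_of_inverse_one_add {R : Type*} [Ring R] {x u : R} {m : ℕ}
    (hx : x ^ m = 0) (hu : u * (1 + x) = 1) (hu' : (1 + x) * u = 1) : (u - 1) ^ m = 0 := by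
  have hcomm : Commute x u :=
    calc x * u = u * (1 + x) * x * u := by rw [hu, one_mul]
      _ = u * x * ((1 + x) * u) := by noncomm_ring
      _ = u * x := by rw [hu', mul_one]
  have hsub : u - 1 = -x * u :=
    calc u - 1 = u - (1 + x) * u := by rw [hu']
      _ = -x * u := by noncomm_ring
  rw [hsub, hcomm.neg_left.mul_pow, neg_pow, hx, mul_zero, zero_mul]

lemma inv_one_add_Nmat_sub_one_pow_self (m : ℕ) : ((1 + Nmat m)⁻¹ - 1) ^ m = 0 := by
  have hdet : IsUnit (1 + Nmat m).det :=
    (Matrix.isUnit_iff_isUnit_det _).mp (IsNilpotent.isUnit_one_add ⟨m, Nmat_pow_self m⟩)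
  exact sub_one_pow_eq_zero_of_inverse_one_add (Nmat_pow_self m)
    (Matrix.nonsing_inv_mul _ hdet) (Matrix.mul_nonsing_inv _ hdet)

lemma LaurentPolynomial.T_mul_T_sub_C_pow {R : Type*} [CommRing R] (a : R) (k : ℕ) :
    (T 1 : R[T;T⁻¹]) * (T 1 - C a) ^ k = (T 1 - C a) ^ (k + 1) + a • (T 1 - C a) ^ k := by
  rw [Algebra.smul_def, ← C_eq_algebraMap]
  ring

section QuotientByPower

open Matrix

variable {R ι M : Type*} [CommRing R] [Fintype ι] [DecidableEq ι] {a : R} {q : ℕ}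

local notation "Q" => R[T;T⁻¹] ⧸ Ideal.span {((T 1 - C a) ^ q : R[T;T⁻¹])}

lemma apply_mk_T_sub_C_pow_of_lt [AddCommGroup M] [Module R M] {f : ℕ → M}
    (hf : ∀ k, q ≤ k → f k = 0) (Φ : Q →ₗ[R] M)
    (hΦ : ∀ k < q, Φ (Ideal.Quotient.mk _ ((T 1 - C a) ^ k)) = f k) (k : ℕ) :
    Φ (Ideal.Quotient.mk _ ((T 1 - C a) ^ k)) = f k := by
  rcases lt_or_ge k q with hk | hk
  · exact hΦ k hk
  · rw [hf k hk, Ideal.Quotient.eq_zero_iff_mem.mpr, map_zero]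
    exact Ideal.mem_span_singleton.mpr (pow_dvd_pow _ hk)

lemma apply_mk_T_mul_eq_smul_vecMul {P : Matrix ι ι R} (hP : P ^ q = 0) (v : ι → R)
    (b : Module.Basis (Fin q) R Q)
    (hb : ∀ j : Fin q, b j = Ideal.Quotient.mk _ ((T 1 - C a) ^ (j : ℕ)))
    (Φ : Q →ₗ[R] (ι → R)) (hΦ : ∀ j : Fin q, Φ (b j) = a ^ (j : ℕ) • v ᵥ* P ^ (j : ℕ))
    (y : Q) : Φ (Ideal.Quotient.mk _ (T 1) * y) = a • Φ y ᵥ* (P + 1) := by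
  have hpow (k : ℕ) : Φ (Ideal.Quotient.mk _ ((T 1 - C a) ^ k)) = a ^ k • v ᵥ* P ^ k :=
    apply_mk_T_sub_C_pow_of_lt (f := fun k => a ^ k • v ᵥ* P ^ k)
      (fun k hk => by rw [pow_eq_zero_of_le hk hP, Matrix.vecMul_zero, smul_zero]) Φ
      (fun k hk => by simpa [hb] using hΦ ⟨k, hk⟩) k
  have hbasis (j : Fin q) :
      Φ (Ideal.Quotient.mk _ (T 1) * b j) = a • Φ (b j) ᵥ* (P + 1) := by
    rw [hb, ← map_mul, T_mul_T_sub_C_pow, map_add, ← Ideal.Quotient.mkₐ_eq_mk R, map_smul,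
      Ideal.Quotient.mkₐ_eq_mk, map_add, map_smul, hpow, hpow, smul_vecMul, vecMul_vecMul,
      mul_add, mul_one, ← pow_succ, vecMul_add]
    module
  have hext : Φ ∘ₗ LinearMap.mulLeft R (Ideal.Quotient.mk _ (T 1))
      = a • Matrix.vecMulLinear (P + 1) ∘ₗ Φ :=
    b.ext fun j => hbasis j
  exact LinearMap.congr_fun hext y

end QuotientByPower

theorem stmt14_general (n q : ℕ) (hqn : n - 1 ≤ q)
    (α : ℂ)
    (b : Module.Basis (Fin q) ℂ
      (LaurentPolynomial ℂ ⧸ Ideal.span {((T 1 - C α) ^ q : LaurentPolynomial ℂ)}))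
    (hb : ∀ j : Fin q,
      b j = Ideal.Quotient.mk _ ((T 1 - C α) ^ (j : ℕ) : LaurentPolynomial ℂ))
    (Φ : (LaurentPolynomial ℂ ⧸
        Ideal.span {((T 1 - C α) ^ q : LaurentPolynomial ℂ)}) →ₗ[ℂ] (Fin (n - 1) → ℂ))
    (hΦ : ∀ j : Fin q,
      Φ (b j) = α ^ (j : ℕ) •
        Matrix.vecMul (fun i : Fin (n - 1) => if (i : ℕ) = 0 then (1 : ℂ) else 0)
          (((1 + Nmat (n - 1))⁻¹ - 1) ^ (j : ℕ))) :
    (∀ y, Φ (Ideal.Quotient.mk _ (((T 1 - C α) ^ q : LaurentPolynomial ℂ)) * y) = 0) ∧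
    (∀ y, Φ (Ideal.Quotient.mk _ (T 1 : LaurentPolynomial ℂ) * y)
      = α • Matrix.vecMul (Φ y) (1 + Nmat (n - 1))⁻¹) := by
  have hzero : Ideal.Quotient.mk (Ideal.span {((T 1 - C α) ^ q : LaurentPolynomial ℂ)})
      ((T 1 - C α) ^ q) = 0 :=
    Ideal.Quotient.eq_zero_iff_mem.mpr (Ideal.mem_span_singleton_self _)
  refine ⟨fun y => by rw [hzero, zero_mul, map_zero], fun y => ?_⟩
  have hP : ((1 + Nmat (n - 1))⁻¹ - 1) ^ q = 0 :=
    pow_eq_zero_of_le hqn (inv_one_add_Nmat_sub_one_pow_self _)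
  simpa only [sub_add_cancel] using apply_mk_T_mul_eq_smul_vecMul hP _ b hb Φ hΦ y

theorem stmt14 (n q : ℕ) (hn : 2 ≤ n) (hq : 1 ≤ q) (hqn : n - 1 ≤ q)
    (α : ℂ) (hα : α ≠ 0)
    (b : Module.Basis (Fin q) ℂ
      (LaurentPolynomial ℂ ⧸ Ideal.span {((T 1 - C α) ^ q : LaurentPolynomial ℂ)}))
    (hb : ∀ j : Fin q,
      b j = Ideal.Quotient.mk _ ((T 1 - C α) ^ (j : ℕ) : LaurentPolynomial ℂ))
    (Φ : (LaurentPolynomial ℂ ⧸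
        Ideal.span {((T 1 - C α) ^ q : LaurentPolynomial ℂ)}) →ₗ[ℂ] (Fin (n - 1) → ℂ))
    (hΦ : ∀ j : Fin q,
      Φ (b j) = α ^ (j : ℕ) •
        Matrix.vecMul (fun i : Fin (n - 1) => if (i : ℕ) = 0 then (1 : ℂ) else 0)
          (((1 + Nmat (n - 1))⁻¹ - 1) ^ (j : ℕ))) :
    (∀ y, Φ (Ideal.Quotient.mk _ (((T 1 - C α) ^ q : LaurentPolynomial ℂ)) * y) = 0) ∧
    (∀ y, Φ (Ideal.Quotient.mk _ (T 1 : LaurentPolynomial ℂ) * y)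
      = α • Matrix.vecMul (Φ y) (1 + Nmat (n - 1))⁻¹) :=
  stmt14_general n q hqn α b hb Φ hΦ
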